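/- Let n ≥ 2 and k ≥ 1 be integers with k dividing n, set m = n/k, and suppose C ⊆ {1,…,n} contains exactly one element of each consecutive block S_i = {(i−1)·m+1, …, i·m} (i = 1,…,k). Then EMD(C) ≥ (n+k)(n−k) / (4·n·(n−1)·k). -/

import Mathlib

/-!
Cut `{1,…,n}` into the `k` blocks of length `m = n/k`. Before block `b` the cluster has exactly
`b` elements, so at the `t`-th position of block `b`, `n` times the gap between the two
cumulative distribution functions is `-t` before the block's element and `m - t` from it on.
Each block thus contributes `(s(s-1)/2 + (m-s)(m-s+1)/2)/n ≥ (m²-1)/(4n)` to the sum defining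
the EMD, where `s` is the offset of its element; summing over the `k` blocks and dividing by
`n - 1` gives `k(m²-1)/(4n(n-1))`, which is the bound because `n = km`.
-/

/-- The Earth Mover's Distance (with the ordered distance) between the uniform
distribution on a cluster `C ⊆ {1,…,n}` of `k` records and the uniform
distribution on the whole data set `{1,…,n}`. -/
noncomputable def EMD (n k : ℕ) (C : Finset ℕ) : ℝ :=
  (1 / ((n : ℝ) - 1)) * ∑ i ∈ Finset.Icc 1 n,
    |∑ j ∈ Finset.Icc 1 i, ((if j ∈ C then (1 : ℝ) / k else 0) - 1 / n)|

namespace Finset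

theorem sum_range_mul_eq_sum_sum {M : Type*} [AddCommMonoid M] (f : ℕ → M) (k m : ℕ) :
    ∑ i ∈ range (k * m), f i = ∑ b ∈ range k, ∑ t ∈ range m, f (b * m + t) := by
  induction k with
  | zero => simp
  | succ k ih => rw [add_one_mul, sum_range_add, ih, sum_range_succ]

theorem sum_Icc_one_eq_sum_range {M : Type*} [AddCommMonoid M] (f : ℕ → M) (N : ℕ) :
    ∑ i ∈ Icc 1 N, f i = ∑ i ∈ range N, f (i + 1) := by
  rw [range_eq_Ico, sum_Ico_add', ← Ico_add_one_right_eq_Icc, zero_add]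

theorem card_inter_Ioc_add_card_inter_Ioc (C : Finset ℕ) {a b c : ℕ} (hab : a ≤ b)
    (hbc : b ≤ c) : #(C ∩ Ioc a b) + #(C ∩ Ioc b c) = #(C ∩ Ioc a c) := by
  rw [← card_union_of_disjoint ((Ioc_disjoint_Ioc_of_le le_rfl).mono inter_subset_right
    inter_subset_right), ← inter_union_distrib_left, Ioc_union_Ioc_eq_Ioc hab hbc]

theorem card_inter_Ioc_zero_mul {C : Finset ℕ} {k m : ℕ}
    (h : ∀ b < k, #(C ∩ Ioc (b * m) (b * m + m)) = 1) {b : ℕ} (hb : b ≤ k) :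
    #(C ∩ Ioc 0 (b * m)) = b := by
  induction b with
  | zero => simp
  | succ b ih =>
    rw [add_one_mul, ← card_inter_Ioc_add_card_inter_Ioc C (Nat.zero_le _) (Nat.le_add_right _ _),
      ih (by omega), h b (by omega)]

theorem exists_inter_Ioc_eq_singleton {C : Finset ℕ} {a m : ℕ}
    (h : #(C ∩ Ioc a (a + m)) = 1) : ∃ j < m, C ∩ Ioc a (a + m) = {a + j + 1} := by
  obtain ⟨p, hp⟩ := card_eq_one.1 h
  have hpa : p ∈ Ioc a (a + m) := mem_of_mem_inter_right (hp ▸ mem_singleton_self p)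
  rw [mem_Ioc] at hpa
  exact ⟨p - a - 1, by omega, by rw [hp]; congr 1; omega⟩

theorem card_inter_Icc_one_of_inter_Ioc_eq_singleton {C : Finset ℕ} {a b m j t : ℕ}
    (hpre : #(C ∩ Ioc 0 a) = b) (hblock : C ∩ Ioc a (a + m) = {a + j + 1}) (ht : t < m) :
    #(C ∩ Icc 1 (a + t + 1)) = b + if j ≤ t then 1 else 0 := by
  have htail : C ∩ Ioc a (a + t + 1) = {a + j + 1} ∩ Ioc a (a + t + 1) := by
    rw [← hblock, inter_assoc, inter_eq_right.2 (Ioc_subset_Ioc_right (by omega))]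
  rw [show Icc 1 (a + t + 1) = Ioc 0 (a + t + 1) from Icc_add_one_left_eq_Ioc 0 _,
    ← card_inter_Ioc_add_card_inter_Ioc C (Nat.zero_le a) (by omega), hpre, htail]
  split_ifs with hjt
  · rw [inter_eq_left.2 (singleton_subset_iff.2 (mem_Ioc.2 ⟨by omega, by omega⟩)),
      card_singleton]
  · rw [singleton_inter_of_notMem fun h => by rw [mem_Ioc] at h; omega, card_empty]

end Finset

open Finset

theorem sum_range_natCast_mul_two (N : ℕ) : (∑ t ∈ range N, (t : ℝ)) * 2 = N * (N - 1) := by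
  induction N with
  | zero => simp
  | succ N ih => rw [sum_range_succ, add_mul, ih]; push_cast; ring

theorem sum_range_abs_ite_sub_ge (m j : ℕ) (hj : j ≤ m) :
    ((m : ℝ) ^ 2 - 1) / 4 ≤ ∑ t ∈ range m, |(if j ≤ t then (m : ℝ) else 0) - (t + 1)| := by
  obtain ⟨r, rfl⟩ := Nat.exists_eq_add_of_le hj
  have hhead : ∑ t ∈ range j, |(if j ≤ t then ((j + r : ℕ) : ℝ) else 0) - (t + 1)|
      = ∑ t ∈ range (j + 1), (t : ℝ) := by
    rw [sum_range_succ', Nat.cast_zero, add_zero]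
    refine sum_congr rfl fun t ht => ?_
    rw [if_neg (by rw [mem_range] at ht; omega), zero_sub, abs_neg, abs_of_pos (by positivity)]
    push_cast; ring
  have htail : ∑ x ∈ range r, |(if j ≤ j + x then ((j + r : ℕ) : ℝ) else 0) - ((j + x : ℕ) + 1)|
      = ∑ x ∈ range r, (x : ℝ) := by
    rw [← sum_range_reflect]
    refine sum_congr rfl fun x hx => ?_
    have hcast : ((r - 1 - x : ℕ) : ℝ) = r - 1 - x := by
      rw [eq_sub_iff_add_eq, eq_sub_iff_add_eq]
      exact_mod_cast (by rw [mem_range] at hx; omega : r - 1 - x + x + 1 = r)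
    rw [if_pos (by omega)]
    push_cast [hcast]
    ring_nf
    exact abs_of_nonneg (Nat.cast_nonneg x)
  rw [sum_range_add, hhead, htail]
  have hj := sum_range_natCast_mul_two (j + 1)
  push_cast at hj ⊢
  nlinarith [sum_range_natCast_mul_two r, sq_nonneg ((j : ℝ) - r + 1)]

/-- The difference `F_C(i) - F_T(i)` of the cumulative distribution functions of the uniform
distributions on `C` (of size `k`) and on `T = {1,…,n}`. -/
noncomputable def cdfGap (n k : ℕ) (C : Finset ℕ) (i : ℕ) : ℝ :=
  #(C ∩ Icc 1 i) / k - i / n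

theorem EMD_eq_sum_abs_cdfGap (n k : ℕ) (C : Finset ℕ) :
    EMD n k C = 1 / ((n : ℝ) - 1) * ∑ i ∈ Icc 1 n, |cdfGap n k C i| := by
  unfold EMD cdfGap
  congr! 3 with i
  rw [sum_sub_distrib, sum_ite_mem, sum_const, sum_const, Nat.card_Icc, inter_comm]
  simp [div_eq_mul_inv]

theorem sum_range_abs_cdfGap_ge {C : Finset ℕ} {k m b j : ℕ} (hk : k ≠ 0)
    (hpre : #(C ∩ Ioc 0 (b * m)) = b) (hblock : C ∩ Ioc (b * m) (b * m + m) = {b * m + j + 1})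
    (hj : j < m) :
    ((m : ℝ) ^ 2 - 1) / (4 * (k * m)) ≤ ∑ t ∈ range m, |cdfGap (k * m) k C (b * m + t + 1)| := by
  have hterm : ∀ t ∈ range m, |cdfGap (k * m) k C (b * m + t + 1)|
      = |(if j ≤ t then (m : ℝ) else 0) - (t + 1)| / (k * m) := by
    intro t ht
    have hk' : (k : ℝ) ≠ 0 := by exact_mod_cast hk
    have hm' : (m : ℝ) ≠ 0 := by exact_mod_cast hj.pos.ne'
    rw [← abs_of_pos (by positivity : (0 : ℝ) < k * m), ← abs_div, cdfGap,
      card_inter_Icc_one_of_inter_Ioc_eq_singleton hpre hblock (mem_range.1 ht)]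
    push_cast
    congr 1
    split_ifs <;> field_simp <;> ring
  rw [sum_congr rfl hterm, ← sum_div, ← div_div]
  gcongr
  exact sum_range_abs_ite_sub_ge m j hj.le

theorem emd_one_per_block_lower_bound_general (n k m : ℕ) (hn : 2 ≤ n)
    (hdvd : k ∣ n) (hm : m = n / k)
    (C : Finset ℕ)
    (hone : ∀ i ∈ Finset.Icc 1 k,
      (C ∩ Finset.Icc ((i - 1) * m + 1) (i * m)).card = 1) :
    ((n : ℝ) + k) * ((n : ℝ) - k) / (4 * n * ((n : ℝ) - 1) * k) ≤ EMD n k C := by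
  obtain rfl : n = k * m := by rw [hm, Nat.mul_div_cancel' hdvd]
  have hk : k ≠ 0 := by rintro rfl; simp at hn
  have hblock : ∀ b < k, #(C ∩ Ioc (b * m) (b * m + m)) = 1 := fun b hb => by
    simpa [add_one_mul, Icc_add_one_left_eq_Ioc] using hone (b + 1) (mem_Icc.2 ⟨by omega, hb⟩)
  have hsum : ∀ b ∈ range k, ((m : ℝ) ^ 2 - 1) / (4 * (k * m))
      ≤ ∑ t ∈ range m, |cdfGap (k * m) k C (b * m + t + 1)| := by
    intro b hb
    obtain ⟨j, hj, hC⟩ := exists_inter_Ioc_eq_singleton (hblock b (mem_range.1 hb))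
    exact sum_range_abs_cdfGap_ge hk (card_inter_Ioc_zero_mul hblock (mem_range.1 hb).le) hC hj
  have hn1 : (1 : ℝ) < (k * m : ℕ) := by exact_mod_cast hn
  calc _ = 1 / (((k * m : ℕ) : ℝ) - 1) * (k • (((m : ℝ) ^ 2 - 1) / (4 * (k * m)))) := by
        have : (k : ℝ) ≠ 0 := by exact_mod_cast hk
        rw [nsmul_eq_mul]
        push_cast at hn1 ⊢
        field_simp [(by linarith : (k : ℝ) * m - 1 ≠ 0)]
        ring
    _ ≤ 1 / (((k * m : ℕ) : ℝ) - 1) * ∑ b ∈ range k, ∑ t ∈ range m,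
          |cdfGap (k * m) k C (b * m + t + 1)| := by
        gcongr
        simpa using card_nsmul_le_sum _ _ _ hsum
    _ = EMD (k * m) k C := by
        rw [EMD_eq_sum_abs_cdfGap, sum_Icc_one_eq_sum_range, sum_range_mul_eq_sum_sum]

/-- If `k ∣ n`, `m = n/k`, and `C ⊆ {1,…,n}` contains exactly one element of
each consecutive block `S_i = {(i−1)m+1, …, im}`, then
`EMD(C) ≥ (n+k)(n−k)/(4n(n−1)k)`. -/
theorem emd_one_per_block_lower_bound (n k m : ℕ) (hn : 2 ≤ n) (hk : 1 ≤ k)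
    (hdvd : k ∣ n) (hm : m = n / k)
    (C : Finset ℕ) (hC : C ⊆ Finset.Icc 1 n)
    (hone : ∀ i ∈ Finset.Icc 1 k,
      (C ∩ Finset.Icc ((i - 1) * m + 1) (i * m)).card = 1)
    (hcard : C.card = k) :
    ((n : ℝ) + k) * ((n : ℝ) - k) / (4 * n * ((n : ℝ) - 1) * k) ≤ EMD n k C :=
  emd_one_per_block_lower_bound_general n k m hn hdvd hm C hone
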